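/- Let η > 0 and σ ∈ S_η. Let h > x > 0 and h' > x' > 0 satisfy x' < x and h' − x' < h − x. Let L : (0,∞) → (0,∞) with L(T) → ∞ as T → ∞, and let t : (0,∞) → [0,∞) satisfy t(T)/min(L(T)³, T) → 0 as T → ∞. Then there exists T₀ > 0 such that for all T ≥ T₀ and all s ∈ [0, t(T)]: γ^{sub,h,x}_T(s) ≤ γ^{sub,h',x'}_T(s) ≤ olγ^{sub,h',x'}_T(s) ≤ olγ^{sub,h,x}_T(s). -/

import Mathlib

/-!
The two lower barriers differ by `(x - x') σ(0) L`, of order `L`, minus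
`v(s/T) T (√(1 - π²/(h²L²)) - √(1 - π²/(h'²L²)))`. Since `v(s/T) T ≤ s/η` and the square
roots differ by `O(1/L²)`, the latter is `O(t/L²) = o(L)` because `t = o(L³)`. For the upper
barriers one needs `(x - x') σ(0) ≤ (h - h') σ(s/T)`; as `|σ'| ≤ 1/η`,
`σ(s/T) ≥ σ(0) - s/(ηT)` with `s/T ≤ t/T = o(1)`, and the gap `(h - h') - (x - x') > 0`
absorbs this error.
-/

open MeasureTheory Filter Set

/-- The natural speed `v(s) = ∫₀^s σ(u) du`. -/
noncomputable def vInt (σ : ℝ → ℝ) (s : ℝ) : ℝ := ∫ u in (0:ℝ)..s, σ u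

/-- The sub-critical lower barrier
`γ^{sub,h,x}_T(t) = v(t/T)·T·√(1 − π²/(h²·L²)) − x·σ(0)·L`. -/
noncomputable def gammaSub (σ : ℝ → ℝ) (T L h x t : ℝ) : ℝ :=
  vInt σ (t / T) * T * Real.sqrt (1 - Real.pi ^ 2 / (h ^ 2 * L ^ 2)) - x * σ 0 * L

/-- The sub-critical upper barrier `olγ^{sub,h,x}_T(t) = γ^{sub,h,x}_T(t) + h·σ(t/T)·L`. -/
noncomputable def olGammaSub (σ : ℝ → ℝ) (T L h x t : ℝ) : ℝ :=
  gammaSub σ T L h x t + h * σ (t / T) * L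

open Real

lemma eventually_le_mul_of_tendsto_div_zero {α : Type*} {l : Filter α} {f g : α → ℝ}
    (hg : ∀ᶠ a in l, 0 < g a) (hfg : Tendsto (fun a => f a / g a) l (nhds 0)) {c : ℝ}
    (hc : 0 < c) : ∀ᶠ a in l, f a ≤ c * g a := by
  filter_upwards [hg, (tendsto_order.1 hfg).2 c hc] with a hga hlt
  exact ((div_lt_iff₀ hga).1 hlt).le

lemma vInt_nonneg {σ : ℝ → ℝ} {u : ℝ} (hu : 0 ≤ u) (hσ : ∀ v ∈ Icc 0 u, 0 ≤ σ v) :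
    0 ≤ vInt σ u :=
  intervalIntegral.integral_nonneg hu hσ

lemma vInt_le_mul {σ : ℝ → ℝ} {u C : ℝ} (hint : IntervalIntegrable σ volume 0 u) (hu : 0 ≤ u)
    (hσ : ∀ v ∈ Icc 0 u, σ v ≤ C) : vInt σ u ≤ C * u := by
  simpa [vInt, mul_comm] using
    intervalIntegral.integral_mono_on hu hint intervalIntegrable_const hσ

lemma sub_mul_le_of_abs_deriv_le {σ : ℝ → ℝ} {u C : ℝ} (hσ : Differentiable ℝ σ) (hu : 0 ≤ u)
    (hbd : ∀ v ∈ Icc 0 u, |deriv σ v| ≤ C) : σ 0 - C * u ≤ σ u := by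
  have := (convex_Icc 0 u).norm_image_sub_le_of_norm_deriv_le (fun v _ => hσ v) hbd
    (left_mem_Icc.2 hu) (right_mem_Icc.2 hu)
  rw [Real.norm_eq_abs, abs_sub_comm, abs_le, sub_zero, Real.norm_of_nonneg hu] at this
  linarith [this.1]

lemma sqrt_sub_sqrt_le_sub {a b : ℝ} (hb : 1 / 4 ≤ b) (hba : b ≤ a) : √a - √b ≤ a - b := by
  have hb' : 1 / 2 ≤ √b := Real.le_sqrt_of_sq_le (by linarith)
  have hab : √b ≤ √a := Real.sqrt_le_sqrt hba
  nlinarith [Real.sq_sqrt (by linarith : 0 ≤ a), Real.sq_sqrt (by linarith : 0 ≤ b)]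

section Barriers

variable {h h' L : ℝ}

lemma sqrt_one_sub_pi_sq_div_le (hh' : 0 < h') (hle : h' ≤ h) (hL : L ≠ 0) :
    √(1 - π ^ 2 / (h' ^ 2 * L ^ 2)) ≤ √(1 - π ^ 2 / (h ^ 2 * L ^ 2)) := by
  gcongr

lemma sqrt_one_sub_pi_sq_div_sub_le (hh' : 0 < h') (hle : h' ≤ h) (hL : 2 * π ≤ h' * L) :
    √(1 - π ^ 2 / (h ^ 2 * L ^ 2)) - √(1 - π ^ 2 / (h' ^ 2 * L ^ 2)) ≤
      π ^ 2 / (h' ^ 2 * L ^ 2) := by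
  have hpos : 0 < h' * L := by linarith [pi_pos]
  have hL0 : L ≠ 0 := by rintro rfl; simp at hpos
  have hsmall : π ^ 2 / (h' ^ 2 * L ^ 2) ≤ 1 / 4 := by
    rw [← mul_pow, div_le_iff₀ (by positivity)]; nlinarith [pi_pos]
  refine (sqrt_sub_sqrt_le_sub (by linarith) ?_).trans ?_
  · exact sub_le_sub_left (by gcongr) 1
  · have : 0 ≤ π ^ 2 / (h ^ 2 * L ^ 2) := by positivity
    linarith

variable {σ : ℝ → ℝ} {T x x' s : ℝ}

lemma gammaSub_le_olGammaSub (hh : 0 ≤ h) (hσ : 0 ≤ σ (s / T)) (hL : 0 ≤ L) :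
    gammaSub σ T L h x s ≤ olGammaSub σ T L h x s :=
  le_add_of_nonneg_right (mul_nonneg (mul_nonneg hh hσ) hL)

lemma gammaSub_le_gammaSub (hv : 0 ≤ vInt σ (s / T) * T) (hh' : 0 < h') (hle : h' ≤ h)
    (hL : 2 * π ≤ h' * L)
    (hbound : vInt σ (s / T) * T * (π ^ 2 / (h' ^ 2 * L ^ 2)) ≤ (x - x') * σ 0 * L) :
    gammaSub σ T L h x s ≤ gammaSub σ T L h' x' s := by
  have := mul_le_mul_of_nonneg_left (sqrt_one_sub_pi_sq_div_sub_le hh' hle hL) hv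
  unfold gammaSub
  rw [mul_sub] at this
  linarith

lemma olGammaSub_le_olGammaSub (hv : 0 ≤ vInt σ (s / T) * T) (hh' : 0 < h') (hle : h' ≤ h)
    (hL : 0 < L) (hσ : (x - x') * σ 0 ≤ (h - h') * σ (s / T)) :
    olGammaSub σ T L h' x' s ≤ olGammaSub σ T L h x s := by
  have := mul_le_mul_of_nonneg_left (sqrt_one_sub_pi_sq_div_le hh' hle hL.ne') hv
  have := mul_le_mul_of_nonneg_right hσ hL.le
  unfold olGammaSub gammaSub
  linarith

end Barriers

lemma barriers_ordered_of_le {η : ℝ} (hη : 0 < η) {σ : ℝ → ℝ} (hσ : Differentiable ℝ σ)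
    (hσ_lb : ∀ u ∈ Icc (0:ℝ) 1, η ≤ σ u) (hσ_ub : ∀ u ∈ Icc (0:ℝ) 1, σ u ≤ η⁻¹)
    (hσ'_bd : ∀ u ∈ Icc (0:ℝ) 1, |deriv σ u| ≤ η⁻¹)
    {h x h' x' : ℝ} (hx'_pos : 0 < x') (hx'h' : x' < h') (hxx' : x' < x) (hgap : h' - x' < h - x)
    {T L s : ℝ} (hT : 0 < T) (hL : 2 * π ≤ h' * L) (hs : 0 ≤ s) (hsT : s ≤ T)
    (hsL : s ≤ (x - x') * η ^ 2 * h' ^ 2 / π ^ 2 * L ^ 3)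
    (hsT_small : s ≤ (h - h' - (x - x')) * η ^ 2 / (h - h') * T) :
    gammaSub σ T L h x s ≤ gammaSub σ T L h' x' s ∧
      gammaSub σ T L h' x' s ≤ olGammaSub σ T L h' x' s ∧
      olGammaSub σ T L h' x' s ≤ olGammaSub σ T L h x s := by
  have hh' : 0 < h' := hx'_pos.trans hx'h'
  have hhh' : 0 < h - h' := by linarith
  have hLpos : 0 < L := pos_of_mul_pos_right (by linarith [pi_pos]) hh'.le
  have hu : s / T ∈ Icc (0:ℝ) 1 := ⟨div_nonneg hs hT.le, (div_le_one hT).2 hsT⟩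
  have hsub : Icc 0 (s / T) ⊆ Icc 0 1 := Icc_subset_Icc_right hu.2
  have hσ0 : η ≤ σ 0 := hσ_lb 0 (left_mem_Icc.2 zero_le_one)
  have hv0 : 0 ≤ vInt σ (s / T) * T :=
    mul_nonneg (vInt_nonneg hu.1 fun v hv => hη.le.trans (hσ_lb v (hsub hv))) hT.le
  have hv : vInt σ (s / T) * T ≤ η⁻¹ * s := by
    have := vInt_le_mul (hσ.continuous.intervalIntegrable 0 _) hu.1 fun v hv => hσ_ub v (hsub hv)
    calc vInt σ (s / T) * T ≤ η⁻¹ * (s / T) * T := by gcongr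
      _ = η⁻¹ * s := by field_simp
  have hσs : σ 0 - η⁻¹ * (s / T) ≤ σ (s / T) :=
    sub_mul_le_of_abs_deriv_le hσ hu.1 fun v hv => hσ'_bd v (hsub hv)
  refine ⟨gammaSub_le_gammaSub hv0 hh' (by linarith) hL ?_,
    gammaSub_le_olGammaSub hh'.le (hη.le.trans (hσ_lb _ hu)) hLpos.le,
    olGammaSub_le_olGammaSub hv0 hh' (by linarith) hLpos ?_⟩
  · calc vInt σ (s / T) * T * (π ^ 2 / (h' ^ 2 * L ^ 2))
        ≤ η⁻¹ * ((x - x') * η ^ 2 * h' ^ 2 / π ^ 2 * L ^ 3) * (π ^ 2 / (h' ^ 2 * L ^ 2)) :=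
          mul_le_mul_of_nonneg_right (hv.trans (by gcongr)) (by positivity)
      _ = (x - x') * η * L := by field_simp
      _ ≤ (x - x') * σ 0 * L := by gcongr
  · have : (h - h') * (η⁻¹ * (s / T)) ≤ (h - h' - (x - x')) * η :=
      calc (h - h') * (η⁻¹ * (s / T))
          ≤ (h - h') * (η⁻¹ * ((h - h' - (x - x')) * η ^ 2 / (h - h'))) := by
            gcongr (h - h') * (η⁻¹ * ?_); exact (div_le_iff₀ hT).2 hsT_small
        _ = (h - h' - (x - x')) * η := by field_simp
    nlinarith

theorem stmt_3_general (η : ℝ) (hη : 0 < η) (σ : ℝ → ℝ)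
    (hσC2 : ContDiff ℝ 2 σ)
    (hσ_lb : ∀ u ∈ Icc (0:ℝ) 1, η ≤ σ u)
    (hσ_ub : ∀ u ∈ Icc (0:ℝ) 1, σ u ≤ η⁻¹)
    (hσ'_bd : ∀ u ∈ Icc (0:ℝ) 1, |deriv σ u| ≤ η⁻¹)
    (h x h' x' : ℝ) (hx'_pos : 0 < x') (hx'h' : x' < h')
    (hxx' : x' < x) (hgap : h' - x' < h - x)
    (L : ℝ → ℝ) (hL : Tendsto L atTop atTop)
    (t : ℝ → ℝ)
    (ht_small : Tendsto (fun T => t T / min ((L T) ^ 3) T) atTop (nhds 0)) :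
    ∃ T₀ > 0, ∀ T ≥ T₀, ∀ s ∈ Icc 0 (t T),
      gammaSub σ T (L T) h x s ≤ gammaSub σ T (L T) h' x' s ∧
      gammaSub σ T (L T) h' x' s ≤ olGammaSub σ T (L T) h' x' s ∧
      olGammaSub σ T (L T) h' x' s ≤ olGammaSub σ T (L T) h x s := by
  have hh' : 0 < h' := hx'_pos.trans hx'h'
  have hc₁ : 0 < (x - x') * η ^ 2 * h' ^ 2 / π ^ 2 := by
    have := sub_pos.2 hxx'; positivity
  have hc₂ : 0 < (h - h' - (x - x')) * η ^ 2 / (h - h') :=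
    div_pos (mul_pos (by linarith) (by positivity)) (by linarith)
  have hmin : ∀ᶠ T in atTop, 0 < min (L T ^ 3) T :=
    ((hL.eventually_gt_atTop 0).and (eventually_gt_atTop 0)).mono fun T hT =>
      lt_min (pow_pos hT.1 3) hT.2
  have ht c (hc : 0 < c) := eventually_le_mul_of_tendsto_div_zero hmin ht_small hc
  obtain ⟨T₀, hT₀⟩ := eventually_atTop.1 <| (eventually_gt_atTop 0).and <|
    (hL.eventually_ge_atTop (2 * π / h')).and <| (ht _ hc₁).and <| (ht _ hc₂).and (ht 1 one_pos)
  refine ⟨max T₀ 1, lt_max_of_lt_right one_pos, fun T hT s hs => ?_⟩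
  obtain ⟨hTpos, hLT, ht₁, ht₂, ht₃⟩ := hT₀ T (le_of_max_le_left hT)
  have hs_le c (hc : 0 < c) (htc : t T ≤ c * min (L T ^ 3) T) :
      s ≤ c * L T ^ 3 ∧ s ≤ c * T :=
    ⟨hs.2.trans (htc.trans (by gcongr; exact min_le_left _ _)),
      hs.2.trans (htc.trans (by gcongr; exact min_le_right _ _))⟩
  exact barriers_ordered_of_le hη (hσC2.differentiable (by norm_num)) hσ_lb hσ_ub hσ'_bd
    hx'_pos hx'h' hxx' hgap hTpos ((div_le_iff₀' hh').1 hLT) hs.1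
    (by simpa using (hs_le 1 one_pos ht₃).2) (hs_le _ hc₁ ht₁).1 (hs_le _ hc₂ ht₂).2

theorem stmt_3 (η : ℝ) (hη : 0 < η) (σ : ℝ → ℝ)
    (hσC2 : ContDiff ℝ 2 σ)
    (hσ_lb : ∀ u ∈ Icc (0:ℝ) 1, η ≤ σ u)
    (hσ_ub : ∀ u ∈ Icc (0:ℝ) 1, σ u ≤ η⁻¹)
    (hσ'_bd : ∀ u ∈ Icc (0:ℝ) 1, |deriv σ u| ≤ η⁻¹)
    (hσ''_bd : ∀ u ∈ Icc (0:ℝ) 1, |deriv (deriv σ) u| ≤ η⁻¹)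
    (h x h' x' : ℝ) (hx_pos : 0 < x) (hxh : x < h) (hx'_pos : 0 < x') (hx'h' : x' < h')
    (hxx' : x' < x) (hgap : h' - x' < h - x)
    (L : ℝ → ℝ) (hLpos : ∀ T > 0, 0 < L T) (hL : Tendsto L atTop atTop)
    (t : ℝ → ℝ) (ht_nonneg : ∀ T > 0, 0 ≤ t T)
    (ht_small : Tendsto (fun T => t T / min ((L T) ^ 3) T) atTop (nhds 0)) :
    ∃ T₀ > 0, ∀ T ≥ T₀, ∀ s ∈ Icc 0 (t T),
      gammaSub σ T (L T) h x s ≤ gammaSub σ T (L T) h' x' s ∧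
      gammaSub σ T (L T) h' x' s ≤ olGammaSub σ T (L T) h' x' s ∧
      olGammaSub σ T (L T) h' x' s ≤ olGammaSub σ T (L T) h x s :=
  stmt_3_general η hη σ hσC2 hσ_lb hσ_ub hσ'_bd h x h' x' hx'_pos hx'h' hxx' hgap L hL t ht_small
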